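/- Let n ≥ 1 and let Y_n ⊂ ℝ² be a GC_n set, i.e., a Π_n-poised set each of whose fundamental polynomials ℓ_{y,Y_n} is a product of polynomials of degree 1. Choose z ∈ ℝ² with ℓ_{y,Y_n}(z) ≠ 0 for all y ∈ Y_n, and set L := ∪_{y∈Y_n} {m ∈ Π : deg m = 1, m divides ℓ_{y,Y_n}, m(z) = 1}. Let Y_{n−1} be any Π_{n−1}-poised subset of Y_n and T := Y_n \ Y_{n−1}. Then the set ∪_{t∈T} {m(x)·ℓ_{t,Y_n}(x) : m ∈ L, m(t) = 0} spans the vector space Π_{n+1} ∩ I(Y_n) and contains an H-basis of the ideal I(Y_n) all of whose elements are products of polynomials of degree 1. -/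

import Mathlib

/-!
Write `W = Π_{n+1} ∩ I(Y_n)`. The candidate products lie in `W`, and an element of `W` is
determined by its top homogeneous component: two with the same top differ by an element of `Π_n`
vanishing on the `Π_n`-poised `Y_n`. So it suffices that the top components of the span exhaust
the forms of degree `n + 1`, i.e. (Euler's identity) contain every `x_i g` with `g` a form of
degree `n`. Interpolating relative to `Y_{n-1}` writes `g` as a combination of the tops of the
`ℓ_t`, `t ∈ T`, and `x_i · top ℓ_t = top ((x_i - t_i) ℓ_t)`. Finally `x_i - t_i` is a combination
of two distinct lines of `L` through `t`. These exist because `T` has a second point `t'`, and if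
a single line `m ∈ L` passed through `t`, it would be the factor of `ℓ_{t'}` through `t` and would
miss `Y_{n-1}`, so the cofactor `ℓ_{t'} / m ∈ Π_{n-1}` would vanish on `Y_{n-1}`.

The H-basis property follows by induction on the degree: the top component of `f ∈ I(Y_n)` of
degree `> n + 1` is `∑ x_i g_i`, and each `g_i`, corrected by its interpolant in `Π_n`, lies in
`I(Y_n)` and has smaller degree.
-/
open MvPolynomial

noncomputable section

abbrev Pt : Type := Fin 2 → ℝ
abbrev BPoly : Type := MvPolynomial (Fin 2) ℝ

/-- `Π_n`: the space of bivariate polynomials of total degree at most `n`. -/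
def PiLE (n : ℕ) : Submodule ℝ BPoly := MvPolynomial.restrictTotalDegree (Fin 2) ℝ n

/-- The vanishing ideal `I(Y)` of a set `Y ⊆ ℝ²`. -/
def vIdeal (Y : Set Pt) : Ideal BPoly where
  carrier := {p | ∀ y ∈ Y, eval y p = 0}
  add_mem' := by
    intro a b ha hb y hy
    simp [map_add, ha y hy, hb y hy]
  zero_mem' := by intro y hy; simp
  smul_mem' := by
    intro c a ha y hy
    simp [smul_eq_mul, ha y hy]

/-- `I(Y)` as an `ℝ`-subspace of `Π`. -/
def vSub (Y : Set Pt) : Submodule ℝ BPoly := (vIdeal Y).restrictScalars ℝ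

/-- `Y` is `Π_n`-poised: every interpolation problem on `Y` has a unique solution in `Π_n`. -/
def Poised (n : ℕ) (Y : Finset Pt) : Prop :=
  ∀ f : Pt → ℝ, ∃! p : BPoly, p ∈ PiLE n ∧ ∀ y ∈ Y, eval y p = f y

/-- `Y` is `Π_n`-independent: every interpolation problem on `Y` has a solution in `Π_n`. -/
def PIndep (n : ℕ) (Y : Finset Pt) : Prop :=
  ∀ f : Pt → ℝ, ∃ p ∈ PiLE n, ∀ y ∈ Y, eval y p = f y

/-- `ℓ y` is the fundamental (Lagrange) polynomial of `y ∈ Y` in `Π_n`. -/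
def IsFundamental (n : ℕ) (Y : Finset Pt) (ℓ : Pt → BPoly) : Prop :=
  ∀ y ∈ Y, ℓ y ∈ PiLE n ∧ ∀ y' ∈ Y, eval y' (ℓ y) = if y' = y then 1 else 0

/-- A finite family is an H-basis of the ideal `I`. -/
def IsHBasisFam {ι : Type} [Fintype ι] (I : Ideal BPoly) (h : ι → BPoly) : Prop :=
  (∀ i, h i ∈ I) ∧ ∀ f ∈ I, ∃ g : ι → BPoly,
    (∀ i, (g i).totalDegree ≤ f.totalDegree - (h i).totalDegree) ∧ f = ∑ i, g i * h i

/-- A finite set is an H-basis of the ideal `I`. -/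
def IsHBasisSet (I : Ideal BPoly) (H : Finset BPoly) : Prop :=
  (∀ p ∈ H, p ∈ I) ∧ ∀ f ∈ I, ∃ g : BPoly → BPoly,
    (∀ p ∈ H, (g p).totalDegree ≤ f.totalDegree - p.totalDegree) ∧ f = ∑ p ∈ H, g p * p

/-- `M` is a linear syzygy matrix for the family `h`. -/
def IsLinSyz (n : ℕ) (h : Fin (n + 2) → BPoly)
    (M : Matrix (Fin (n + 1)) (Fin (n + 2)) BPoly) : Prop :=
  (∀ i j, M i j ∈ PiLE 1) ∧ ∀ i, ∑ j, M i j * h j = 0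

/-- The rank of a polynomial matrix over the field of rational functions. -/
def ratRank {a b : ℕ} (M : Matrix (Fin a) (Fin b) BPoly) : ℕ :=
  (M.map (algebraMap BPoly (FractionRing BPoly))).rank


/-- The candidate set of products `m · ℓ_{t,Y_n}` with `m` a normalized linear
factor of some fundamental polynomial vanishing at `t ∈ T = Y_n \ Y_{n-1}`. -/
def gcSet (Y Y' : Finset Pt) (z : Pt) (ell : Pt → BPoly) : Set BPoly :=
  {p | ∃ t ∈ Y \ Y', ∃ m : BPoly,
    m.totalDegree = 1 ∧ eval z m = 1 ∧ (∃ y ∈ Y, m ∣ ell y) ∧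
    eval t m = 0 ∧ p = m * ell t}

lemma Submodule.span_pair_eq_of_linearIndependent {K V ι : Type*} [Field K] [AddCommGroup V]
    [Module K V] [Fintype ι] (hι : Fintype.card ι ≤ 2) {u : ι → V} {a b : V}
    (hab : LinearIndependent K ![a, b]) (ha : a ∈ span K (Set.range u))
    (hb : b ∈ span K (Set.range u)) :
    span K {a, b} = span K (Set.range u) := by
  have hrange : Set.range ![a, b] = {a, b} := by simp [Set.pair_comm]
  have := FiniteDimensional.span_of_finite K (Set.finite_range u)
  refine Submodule.eq_of_le_of_finrank_le ?_ ?_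
  · rw [span_le, Set.insert_subset_iff, Set.singleton_subset_iff]
    exact ⟨ha, hb⟩
  · rw [← hrange, finrank_span_eq_card hab, Fintype.card_fin]
    exact (finrank_range_le_card u).trans hι

namespace MvPolynomial

variable {σ R : Type*}

section CommSemiring

variable [CommSemiring R]

lemma homogeneousComponent_mul_of_isHomogeneous {w : MvPolynomial σ R} {k : ℕ}
    (hw : w.IsHomogeneous k) (j : ℕ) (q : MvPolynomial σ R) :
    homogeneousComponent (j + k) (w * q) = w * homogeneousComponent j q := by
  induction q using MvPolynomial.induction_on' with
  | monomial d c =>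
    have hmon : (monomial d c).IsHomogeneous d.degree := isHomogeneous_monomial c rfl
    rw [homogeneousComponent_of_mem (hw.mul hmon), homogeneousComponent_of_mem hmon]
    by_cases hj : j = d.degree <;> simp [hj, add_comm]
  | add p q hp hq => simp only [mul_add, map_add, hp, hq]

lemma totalDegree_le_pred_of_homogeneousComponent_eq_zero {f : MvPolynomial σ R} {D : ℕ}
    (hf : f.totalDegree ≤ D) (h0 : homogeneousComponent D f = 0) : f.totalDegree ≤ D - 1 := by
  refine Finset.sup_le fun d hd => ?_
  have hle : d.degree ≤ D := (le_totalDegree hd).trans hf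
  have hne : d.degree ≠ D := by
    intro heq
    have hc := coeff_homogeneousComponent D f d
    rw [h0, coeff_zero, if_pos heq] at hc
    exact (mem_support_iff.mp hd) hc.symm
  change d.degree ≤ D - 1
  omega

end CommSemiring

lemma mem_span_X_sub_C_of_totalDegree_le_one [CommRing R] {a : MvPolynomial σ R}
    (ha : a.totalDegree ≤ 1) (t : σ → R) (hat : eval t a = 0) :
    a ∈ Submodule.span R (Set.range fun i => X i - C (t i)) := by
  classical
  have hsplit : a = C (coeff 0 a) + homogeneousComponent 1 a := by
    ext d
    rw [coeff_add, coeff_C, coeff_homogeneousComponent]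
    rcases Nat.lt_or_ge 1 d.degree with hd | hd
    · rw [if_neg (by rintro rfl; simp at hd), if_neg hd.ne', coeff_eq_zero_of_totalDegree_lt
        (ha.trans_lt hd), add_zero]
    · rcases Nat.le_one_iff_eq_zero_or_eq_one.mp hd with hd | hd
      · rw [(Finsupp.degree_eq_zero_iff d).mp hd]; simp
      · rw [if_neg (by rintro rfl; simp at hd), if_pos hd, zero_add]
  have hlin : ∀ h ∈ Submodule.span R (Set.range (X : σ → MvPolynomial σ R)),
      h - C (eval t h) ∈ Submodule.span R (Set.range fun i => X i - C (t i)) := by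
    intro h hh
    induction hh using Submodule.span_induction with
    | mem x hx =>
      obtain ⟨i, rfl⟩ := hx
      exact Submodule.subset_span ⟨i, by simp⟩
    | zero => simp
    | add x y _ _ hx hy =>
      convert Submodule.add_mem _ hx hy using 1
      simp only [map_add]; ring
    | smul c x _ hx =>
      convert Submodule.smul_mem _ c hx using 1
      simp only [smul_eq_C_mul, map_mul, eval_C]; ring
  have htop : homogeneousComponent 1 a ∈ Submodule.span R (Set.range X) := by
    rw [← homogeneousSubmodule_one_eq_span_X]
    exact homogeneousComponent_mem 1 a
  convert hlin _ htop using 1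
  conv_lhs => rw [hsplit]
  have hev := congrArg (eval t) hsplit
  rw [hat, map_add, eval_C] at hev
  rw [eq_neg_of_add_eq_zero_left hev.symm, map_neg]
  ring

lemma IsHomogeneous.exists_eq_sum_X_mul [Fintype σ] [Field R] [CharZero R]
    {φ : MvPolynomial σ R} {D : ℕ} (hφ : φ.IsHomogeneous (D + 1)) :
    ∃ g : σ → MvPolynomial σ R, (∀ i, (g i).IsHomogeneous D) ∧ φ = ∑ i, X i * g i := by
  refine ⟨fun i => ((D + 1 : ℕ) : R)⁻¹ • pderiv i φ, fun i => ?_, ?_⟩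
  · rw [← mem_homogeneousSubmodule] at hφ ⊢
    exact Submodule.smul_mem _ _ (hφ.pderiv (i := i))
  · simp only [mul_smul_comm, ← Finset.smul_sum, hφ.sum_X_mul_pderiv]
    rw [← Nat.cast_smul_eq_nsmul R, smul_smul,
      inv_mul_cancel₀ (Nat.cast_ne_zero.mpr D.succ_ne_zero), one_smul]

lemma linearIndependent_pair_of_eval_eq_one [Field R] {z : σ → R} {m₁ m₂ : MvPolynomial σ R}
    (h₁ : eval z m₁ = 1) (h₂ : eval z m₂ = 1) (hne : m₁ ≠ m₂) :
    LinearIndependent R ![m₁, m₂] := by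
  rw [LinearIndependent.pair_iff]
  intro s u hsu
  have hev := congrArg (eval z) hsu
  simp only [map_add, smul_eval, h₁, h₂, map_zero] at hev
  obtain rfl : u = -s := by linear_combination hev
  rw [neg_smul, ← sub_eq_add_neg, ← smul_sub, smul_eq_zero] at hsu
  have hs : s = 0 := hsu.resolve_right (sub_ne_zero.mpr hne)
  simp [hs]

def IsProdOfLinear [CommSemiring R] (p : MvPolynomial σ R) : Prop :=
  ∃ s : Multiset (MvPolynomial σ R), (∀ m ∈ s, m.totalDegree = 1) ∧ p = s.prod

lemma IsProdOfLinear.linear_mul [CommSemiring R] {m p : MvPolynomial σ R}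
    (hm : m.totalDegree = 1) (hp : p.IsProdOfLinear) : (m * p).IsProdOfLinear := by
  obtain ⟨s, hs, rfl⟩ := hp
  exact ⟨m ::ₘ s, Multiset.forall_mem_cons.mpr ⟨hm, hs⟩, (Multiset.prod_cons m s).symm⟩

lemma IsProdOfLinear.exists_factor [Field R] {p : MvPolynomial σ R} (hp : p.IsProdOfLinear)
    {z t : σ → R} (hz : eval z p ≠ 0) (ht : eval t p = 0) :
    ∃ m : MvPolynomial σ R, m.totalDegree = 1 ∧ eval z m = 1 ∧ m ∣ p ∧ eval t m = 0 := by
  obtain ⟨s, hs, rfl⟩ := hp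
  rw [map_multiset_prod, Multiset.prod_eq_zero_iff] at ht
  obtain ⟨m₀, hm₀, hm₀t⟩ := Multiset.mem_map.mp ht
  have hm₀z : eval z m₀ ≠ 0 := fun h =>
    hz (by rw [map_multiset_prod]; exact Multiset.prod_eq_zero (h ▸ Multiset.mem_map_of_mem _ hm₀))
  have hm₀_eq : m₀ = eval z m₀ • (eval z m₀)⁻¹ • m₀ := by
    rw [smul_smul, mul_inv_cancel₀ hm₀z, one_smul]
  refine ⟨(eval z m₀)⁻¹ • m₀, le_antisymm ?_ ?_, ?_, ?_, ?_⟩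
  · exact (totalDegree_smul_le _ _).trans (hs m₀ hm₀).le
  · rw [← hs m₀ hm₀]
    conv_lhs => rw [hm₀_eq]
    exact totalDegree_smul_le _ _
  · rw [smul_eval, inv_mul_cancel₀ hm₀z]
  · refine dvd_trans ⟨C (eval z m₀), ?_⟩ (Multiset.dvd_prod hm₀)
    conv_lhs => rw [hm₀_eq]
    rw [smul_eq_C_mul, mul_comm]
  · rw [smul_eval, hm₀t, mul_zero]

end MvPolynomial

lemma mem_PiLE {n : ℕ} {p : BPoly} : p ∈ PiLE n ↔ p.totalDegree ≤ n :=
  mem_restrictTotalDegree _ _ p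

instance finiteDimensional_PiLE (n : ℕ) : FiniteDimensional ℝ (PiLE n) := by
  unfold PiLE
  infer_instance

namespace IsFundamental

variable {n : ℕ} {Y : Finset Pt} {ell : Pt → BPoly} {y y' : Pt}

lemma mem_PiLE (hell : IsFundamental n Y ell) (hy : y ∈ Y) : ell y ∈ PiLE n :=
  (hell y hy).1

lemma eval_self (hell : IsFundamental n Y ell) (hy : y ∈ Y) : eval y (ell y) = 1 := by
  simp [(hell y hy).2 y hy]

lemma eval_of_ne (hell : IsFundamental n Y ell) (hy : y ∈ Y) (hy' : y' ∈ Y) (hne : y' ≠ y) :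
    eval y' (ell y) = 0 := by
  simp [(hell y hy).2 y' hy', hne]

end IsFundamental

namespace Poised

variable {n : ℕ} {Y : Finset Pt}

lemma eq_zero (hY : Poised n Y) {p : BPoly} (hp : p ∈ PiLE n) (h0 : ∀ y ∈ Y, eval y p = 0) :
    p = 0 := by
  obtain ⟨q, -, huniq⟩ := hY fun _ => 0
  rw [huniq p ⟨hp, h0⟩, huniq 0 ⟨zero_mem _, fun y _ => map_zero _⟩]

lemma exists_interp (hY : Poised n Y) (f : Pt → ℝ) : ∃ p ∈ PiLE n, ∀ y ∈ Y, eval y p = f y :=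
  let ⟨p, hp, _⟩ := hY f
  ⟨p, hp⟩

lemma nonempty (hY : Poised n Y) : Y.Nonempty := by
  rw [Finset.nonempty_iff_ne_empty]
  rintro rfl
  exact one_ne_zero (hY.eq_zero (mem_PiLE.mpr (by simp)) (by simp))

lemma eq_sum_smul_fundamental (hY : Poised n Y) {ell : Pt → BPoly} (hell : IsFundamental n Y ell)
    {g : BPoly} (hg : g ∈ PiLE n) : g = ∑ y ∈ Y, eval y g • ell y := by
  rw [← sub_eq_zero]
  refine hY.eq_zero (sub_mem hg (sum_mem fun y hy => Submodule.smul_mem _ _ (hell.mem_PiLE hy)))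
    fun y hy => ?_
  rw [map_sub, map_sum, Finset.sum_eq_single_of_mem y hy, smul_eval, hell.eval_self hy, mul_one,
    sub_self]
  intro y' hy' hne
  rw [smul_eval, hell.eval_of_ne hy' hy hne.symm, mul_zero]

end Poised

lemma homogeneousComponent_eq_sum_fundamental {n : ℕ} {Y Y' : Finset Pt} {ell : Pt → BPoly}
    (hn : 1 ≤ n) (hY : Poised n Y) (hell : IsFundamental n Y ell) (hY' : Poised (n - 1) Y')
    {g : BPoly} (hg : g ∈ PiLE n) :
    ∃ c : Pt → ℝ,
      homogeneousComponent n g = ∑ t ∈ Y \ Y', c t • homogeneousComponent n (ell t) := by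
  obtain ⟨p, hp, hpg⟩ := hY'.exists_interp fun y => eval y g
  have hpn : p.totalDegree < n := by have := mem_PiLE.mp hp; omega
  have hsum := hY.eq_sum_smul_fundamental hell (sub_mem hg (mem_PiLE.mpr hpn.le))
  have hT : ∑ t ∈ Y \ Y', eval t (g - p) • ell t = ∑ y ∈ Y, eval y (g - p) • ell y :=
    Finset.sum_subset Finset.sdiff_subset fun y hy hyT => by
      rw [map_sub, hpg y (by simpa [hy] using hyT), sub_self, zero_smul]
  refine ⟨fun t => eval t (g - p), ?_⟩
  simpa only [map_sub, homogeneousComponent_eq_zero n p hpn, sub_zero, map_sum, map_smul] using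
    congrArg (homogeneousComponent n) (hsum.trans hT.symm)

lemma exists_totalDegree_le_one_eval_eq_zero {t y : Pt} (hne : y ≠ t) :
    ∃ a : BPoly, a.totalDegree ≤ 1 ∧ a ≠ 0 ∧ eval t a = 0 ∧ eval y a = 0 := by
  have hline : ∀ i, (X i - C (t i) : BPoly) ∈ PiLE 1 := fun i =>
    sub_mem (mem_PiLE.mpr (totalDegree_X i).le) (mem_PiLE.mpr (by simp))
  refine ⟨(y 0 - t 0) • (X 1 - C (t 1)) - (y 1 - t 1) • (X 0 - C (t 0)),
    mem_PiLE.mp (sub_mem (Submodule.smul_mem _ _ (hline 1)) (Submodule.smul_mem _ _ (hline 0))),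
    fun ha => hne ?_, by simp, by simp; ring⟩
  -- at the point `t + J (y - t)`, with `J` the rotation by a right angle, `a` equals `|y - t|²`
  have hw := congrArg (eval ![t 0 - (y 1 - t 1), t 1 + (y 0 - t 0)]) ha
  simp only [map_sub, smul_eval, eval_X, eval_C, map_zero, Matrix.cons_val_zero,
    Matrix.cons_val_one] at hw
  obtain ⟨h0, h1⟩ := (add_eq_zero_iff_of_nonneg (sq_nonneg (y 0 - t 0)) (sq_nonneg (y 1 - t 1))).mp
    (by linear_combination hw)
  funext j
  fin_cases j
  · exact sub_eq_zero.mp (pow_eq_zero_iff two_ne_zero |>.mp h0)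
  · exact sub_eq_zero.mp (pow_eq_zero_iff two_ne_zero |>.mp h1)

lemma Poised.exists_ne_mem_sdiff {n : ℕ} {Y Y' : Finset Pt} (hn : 1 ≤ n) (hY : Poised n Y)
    (hY' : Poised (n - 1) Y') {t : Pt} (ht : t ∉ Y') : ∃ t' ∈ Y \ Y', t' ≠ t := by
  by_contra! hT
  obtain ⟨y₀, hy₀⟩ := hY'.nonempty
  obtain ⟨a, ha, ha0, hat, hay₀⟩ :=
    exists_totalDegree_le_one_eval_eq_zero (ne_of_mem_of_not_mem hy₀ ht)
  obtain ⟨p, hp, hpa⟩ := hY'.exists_interp fun y => if eval y a = 0 then 1 else 0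
  have hap : a * p = 0 := by
    refine hY.eq_zero (mem_PiLE.mpr ((totalDegree_mul a p).trans ?_)) fun y hy => ?_
    · have := mem_PiLE.mp hp
      omega
    · by_cases hy' : y ∈ Y'
      · rw [map_mul, hpa y hy']
        split_ifs with h <;> simp [h]
      · rw [hT y (Finset.mem_sdiff.mpr ⟨hy, hy'⟩), map_mul, hat, zero_mul]
  have hp0 := hpa y₀ hy₀
  rw [(mul_eq_zero.mp hap).resolve_left ha0, if_pos hay₀, map_zero] at hp0
  exact zero_ne_one hp0

/-- The set `L` of the informal statement. -/
def gcLines (Y : Finset Pt) (z : Pt) (ell : Pt → BPoly) : Set BPoly :=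
  {m | m.totalDegree = 1 ∧ eval z m = 1 ∧ ∃ y ∈ Y, m ∣ ell y}

section GC

variable {n : ℕ} {Y Y' : Finset Pt} {ell : Pt → BPoly} {z : Pt}

lemma exists_mem_gcLines (hGC : ∀ y ∈ Y, (ell y).IsProdOfLinear)
    (hz : ∀ y ∈ Y, eval z (ell y) ≠ 0) {y t : Pt} (hy : y ∈ Y) (ht : eval t (ell y) = 0) :
    ∃ m ∈ gcLines Y z ell, m ∣ ell y ∧ eval t m = 0 :=
  let ⟨m, hm, hmz, hmy, hmt⟩ := (hGC y hy).exists_factor (hz y hy) ht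
  ⟨m, ⟨hm, hmz, y, hy, hmy⟩, hmy, hmt⟩

lemma exists_two_gcLines (hn : 1 ≤ n) (hY : Poised n Y) (hell : IsFundamental n Y ell)
    (hGC : ∀ y ∈ Y, (ell y).IsProdOfLinear) (hz : ∀ y ∈ Y, eval z (ell y) ≠ 0)
    (hY'sub : Y' ⊆ Y) (hY' : Poised (n - 1) Y') {t : Pt} (ht : t ∈ Y \ Y') :
    ∃ m₁ ∈ gcLines Y z ell, ∃ m₂ ∈ gcLines Y z ell, eval t m₁ = 0 ∧ eval t m₂ = 0 ∧ m₁ ≠ m₂ := by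
  obtain ⟨htY, htY'⟩ := Finset.mem_sdiff.mp ht
  by_contra! huniq
  obtain ⟨t', ht', ht't⟩ := hY.exists_ne_mem_sdiff hn hY' htY'
  obtain ⟨ht'Y, ht'Y'⟩ := Finset.mem_sdiff.mp ht'
  obtain ⟨m, hm, ⟨q, hq⟩, hmt⟩ :=
    exists_mem_gcLines hGC hz ht'Y (hell.eval_of_ne ht'Y htY ht't.symm)
  -- every `ℓ_y` with `y ≠ t` vanishes at `t`, so its normalized factor through `t` must be `m`
  have hm_ne : ∀ y ∈ Y, y ≠ t → eval y m ≠ 0 := by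
    intro y hy hyt hmy
    obtain ⟨m', hm', ⟨r, hr⟩, hm't⟩ :=
      exists_mem_gcLines hGC hz hy (hell.eval_of_ne hy htY hyt.symm)
    have h1 := hell.eval_self hy
    rw [hr, huniq m' hm' m hm hm't hmt, map_mul, hmy, zero_mul] at h1
    exact zero_ne_one h1
  have hq0 : q = 0 := by
    refine hY'.eq_zero (mem_PiLE.mpr ?_) fun y hy => ?_
    · have hq' : q ≠ 0 := by rintro rfl; simpa [hq] using hell.eval_self ht'Y
      have hdeg := mem_PiLE.mp (hell.mem_PiLE ht'Y)
      have hm0 : m ≠ 0 := by rintro rfl; exact absurd hm.1 (by simp)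
      rw [hq, totalDegree_mul_of_isDomain hm0 hq', hm.1] at hdeg
      omega
    · have h0 := hell.eval_of_ne ht'Y (hY'sub hy) (by rintro rfl; exact ht'Y' hy)
      rw [hq, map_mul] at h0
      exact (mul_eq_zero.mp h0).resolve_left (hm_ne y (hY'sub hy) (by rintro rfl; exact htY' hy))
  simpa [hq, hq0] using hell.eval_self ht'Y

lemma mul_mem_gcSet {t : Pt} (ht : t ∈ Y \ Y') {m : BPoly} (hm : m ∈ gcLines Y z ell)
    (hmt : eval t m = 0) : m * ell t ∈ gcSet Y Y' z ell :=
  ⟨t, ht, m, hm.1, hm.2.1, hm.2.2, hmt, rfl⟩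

lemma gcSet_subset (hell : IsFundamental n Y ell) :
    gcSet Y Y' z ell ⊆ (PiLE (n + 1) ⊓ vSub (Y : Set Pt) : Submodule ℝ BPoly) := by
  rintro _ ⟨t, ht, m, hm, -, -, hmt, rfl⟩
  have htY := (Finset.mem_sdiff.mp ht).1
  refine Submodule.mem_inf.mpr ⟨mem_PiLE.mpr ((totalDegree_mul _ _).trans ?_), fun y hy => ?_⟩
  · have := mem_PiLE.mp (hell.mem_PiLE htY)
    omega
  · rw [map_mul]
    by_cases hyt : y = t
    · rw [hyt, hmt, zero_mul]
    · rw [hell.eval_of_ne htY hy hyt, mul_zero]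

lemma X_sub_C_mul_mem_span_gcSet (hn : 1 ≤ n) (hY : Poised n Y) (hell : IsFundamental n Y ell)
    (hGC : ∀ y ∈ Y, (ell y).IsProdOfLinear) (hz : ∀ y ∈ Y, eval z (ell y) ≠ 0)
    (hY'sub : Y' ⊆ Y) (hY' : Poised (n - 1) Y') {t : Pt} (ht : t ∈ Y \ Y') (i : Fin 2) :
    (X i - C (t i)) * ell t ∈ Submodule.span ℝ (gcSet Y Y' z ell) := by
  obtain ⟨m₁, hm₁, m₂, hm₂, hm₁t, hm₂t, hne⟩ :=
    exists_two_gcLines hn hY hell hGC hz hY'sub hY' ht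
  have hspan := Submodule.span_pair_eq_of_linearIndependent (by simp)
    (linearIndependent_pair_of_eval_eq_one hm₁.2.1 hm₂.2.1 hne)
    (mem_span_X_sub_C_of_totalDegree_le_one hm₁.1.le t hm₁t)
    (mem_span_X_sub_C_of_totalDegree_le_one hm₂.1.le t hm₂t)
  obtain ⟨α, β, hαβ⟩ := Submodule.mem_span_pair.mp (hspan ▸ Submodule.subset_span ⟨i, rfl⟩ :
    X i - C (t i) ∈ Submodule.span ℝ {m₁, m₂})
  rw [← hαβ, add_mul, smul_mul_assoc, smul_mul_assoc]
  exact add_mem (Submodule.smul_mem _ _ (Submodule.subset_span (mul_mem_gcSet ht hm₁ hm₁t)))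
    (Submodule.smul_mem _ _ (Submodule.subset_span (mul_mem_gcSet ht hm₂ hm₂t)))

lemma mem_map_homogeneousComponent_span_gcSet (hn : 1 ≤ n) (hY : Poised n Y)
    (hell : IsFundamental n Y ell) (hGC : ∀ y ∈ Y, (ell y).IsProdOfLinear)
    (hz : ∀ y ∈ Y, eval z (ell y) ≠ 0) (hY'sub : Y' ⊆ Y) (hY' : Poised (n - 1) Y')
    {h : BPoly} (hh : h.IsHomogeneous (n + 1)) :
    h ∈ (Submodule.span ℝ (gcSet Y Y' z ell)).map (homogeneousComponent (n + 1)) := by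
  obtain ⟨g, hg, rfl⟩ := hh.exists_eq_sum_X_mul
  refine sum_mem fun i _ => ?_
  obtain ⟨c, hc⟩ := homogeneousComponent_eq_sum_fundamental hn hY hell hY'
    (mem_PiLE.mpr (hg i).totalDegree_le)
  rw [homogeneousComponent_eq_self (hg i)] at hc
  rw [hc, Finset.mul_sum]
  refine sum_mem fun t ht => ?_
  rw [mul_smul_comm]
  refine Submodule.smul_mem _ _
    ⟨_, X_sub_C_mul_mem_span_gcSet hn hY hell hGC hz hY'sub hY' ht i, ?_⟩
  have hdeg := mem_PiLE.mp (hell.mem_PiLE (Finset.mem_sdiff.mp ht).1)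
  rw [sub_mul, map_sub, homogeneousComponent_C_mul,
    homogeneousComponent_eq_zero _ (ell t) (by omega), mul_zero, sub_zero,
    homogeneousComponent_mul_of_isHomogeneous (isHomogeneous_X ℝ i)]

theorem span_gcSet_eq (hn : 1 ≤ n) (hY : Poised n Y) (hell : IsFundamental n Y ell)
    (hGC : ∀ y ∈ Y, (ell y).IsProdOfLinear) (hz : ∀ y ∈ Y, eval z (ell y) ≠ 0)
    (hY'sub : Y' ⊆ Y) (hY' : Poised (n - 1) Y') :
    Submodule.span ℝ (gcSet Y Y' z ell) = PiLE (n + 1) ⊓ vSub (Y : Set Pt) := by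
  have hle := Submodule.span_le.mpr (gcSet_subset (Y' := Y') (z := z) hell)
  refine le_antisymm hle fun p hp => ?_
  obtain ⟨q, hq, hqp⟩ := mem_map_homogeneousComponent_span_gcSet hn hY hell hGC hz hY'sub hY'
    (homogeneousComponent_isHomogeneous (n + 1) p)
  obtain ⟨hpdeg, hpY⟩ := Submodule.mem_inf.mp hp
  obtain ⟨hqdeg, hqY⟩ := Submodule.mem_inf.mp (hle hq)
  have hpq : p - q = 0 := by
    refine hY.eq_zero (mem_PiLE.mpr ?_) fun y hy => ?_
    · refine totalDegree_le_pred_of_homogeneousComponent_eq_zero (D := n + 1)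
        ((totalDegree_sub p q).trans (max_le (mem_PiLE.mp hpdeg) (mem_PiLE.mp hqdeg))) ?_
      rw [map_sub, hqp, sub_self]
    · rw [map_sub, hpY y hy, hqY y hy, sub_zero]
  rwa [sub_eq_zero.mp hpq]

end GC

namespace Poised

variable {n : ℕ} {Y : Finset Pt}

lemma exists_reduction (hY : Poised n Y) {f : BPoly} (hf : f ∈ vIdeal (Y : Set Pt))
    (hfn : n + 2 ≤ f.totalDegree) :
    ∃ r : Fin 2 → BPoly, (∀ i, r i ∈ vIdeal (Y : Set Pt) ∧ (r i).totalDegree < f.totalDegree) ∧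
      f - ∑ i, X i * r i ∈ vIdeal (Y : Set Pt) ∧
      (f - ∑ i, X i * r i).totalDegree < f.totalDegree := by
  obtain ⟨E, hE⟩ : ∃ E, f.totalDegree = E + 1 := ⟨f.totalDegree - 1, by omega⟩
  obtain ⟨g, hg, hfg⟩ :=
    (hE ▸ homogeneousComponent_isHomogeneous f.totalDegree f).exists_eq_sum_X_mul
  -- correct each `g i` by its interpolant in `Π_n`, which leaves its top component unchanged
  choose p hp hpg using fun i => hY.exists_interp fun y => eval y (g i)
  have hpE : ∀ i, (p i).totalDegree < E := fun i => by have := mem_PiLE.mp (hp i); omega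
  have hr : ∀ i, g i - p i ∈ vIdeal (Y : Set Pt) ∧ (g i - p i).totalDegree ≤ E := fun i =>
    ⟨fun y hy => by rw [map_sub, hpg i y hy, sub_self],
      (totalDegree_sub _ _).trans (max_le (hg i).totalDegree_le (hpE i).le)⟩
  refine ⟨fun i => g i - p i, fun i => ⟨(hr i).1, (Nat.lt_succ_of_le (hr i).2).trans_eq hE.symm⟩,
    sub_mem hf (sum_mem fun i _ => Ideal.mul_mem_left _ _ (hr i).1), ?_⟩
  have hdeg : (f - ∑ i, X i * (g i - p i)).totalDegree ≤ E + 1 := by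
    refine (totalDegree_sub _ _).trans (max_le hE.le ?_)
    refine (totalDegree_finsetSum _ _).trans (Finset.sup_le fun i _ => ?_)
    refine (totalDegree_mul _ _).trans ?_
    rw [totalDegree_X]
    have := (hr i).2
    omega
  have htop : homogeneousComponent (E + 1) (f - ∑ i, X i * (g i - p i)) = 0 := by
    simp only [map_sub, map_sum, homogeneousComponent_mul_of_isHomogeneous (isHomogeneous_X ℝ _),
      homogeneousComponent_eq_zero E _ (hpE _), sub_zero, homogeneousComponent_eq_self (hg _)]
    rw [hfg, sub_self]
  have := totalDegree_le_pred_of_homogeneousComponent_eq_zero hdeg htop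
  rw [hE]
  exact this.trans_lt (by omega)

theorem isHBasisSet_vIdeal (hY : Poised n Y) {H : Finset BPoly}
    (hH : Submodule.span ℝ (H : Set BPoly) = PiLE (n + 1) ⊓ vSub (Y : Set Pt)) :
    IsHBasisSet (vIdeal (Y : Set Pt)) H := by
  have hHW : ∀ p ∈ H, p ∈ PiLE (n + 1) ⊓ vSub (Y : Set Pt) := fun p hp =>
    hH ▸ Submodule.subset_span hp
  refine ⟨fun p hp => (Submodule.mem_inf.mp (hHW p hp)).2, fun f hf => ?_⟩
  induction hD : f.totalDegree using Nat.strong_induction_on generalizing f with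
  | _ D ih =>
  rcases le_or_gt D (n + 1) with hDn | hDn
  · have hfH : f ∈ Submodule.span ℝ (H : Set BPoly) :=
      hH ▸ Submodule.mem_inf.mpr ⟨mem_PiLE.mpr (hD ▸ hDn), hf⟩
    obtain ⟨c, -, hc⟩ := Submodule.mem_span_finset.mp hfH
    refine ⟨fun p => C (c p), fun p _ => by simp, ?_⟩
    simp only [← hc, smul_eq_C_mul]
  · obtain ⟨r, hr, hs, hsdeg⟩ := hY.exists_reduction hf (by omega)
    choose G hGdeg hG using fun i => ih _ (hD ▸ (hr i).2) (r i) (hr i).1 rfl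
    obtain ⟨G', hG'deg, hG'⟩ := ih _ (hD ▸ hsdeg) _ hs rfl
    refine ⟨fun p => G' p + ∑ i, X i * G i p, fun p hp => ?_, ?_⟩
    · have hpdeg := mem_PiLE.mp (Submodule.mem_inf.mp (hHW p hp)).1
      refine (totalDegree_add _ _).trans (max_le ((hG'deg p hp).trans (by omega)) ?_)
      refine (totalDegree_finsetSum _ _).trans (Finset.sup_le fun i _ => ?_)
      refine (totalDegree_mul _ _).trans ?_
      rw [totalDegree_X]
      have := hGdeg i p hp
      have := (hr i).2
      omega
    · calc f = (f - ∑ i, X i * r i) + ∑ i, X i * r i := by ring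
        _ = _ := by
          conv_lhs => rw [hG']
          simp only [hG, Finset.mul_sum, add_mul, Finset.sum_add_distrib, Finset.sum_mul, mul_assoc]
          rw [Finset.sum_comm]

end Poised

/-- For a `GC_n` set `Y_n` (all fundamental polynomials are
products of linear factors), a point `z` with `ℓ_{y,Y_n}(z) ≠ 0` for all `y`,
and any `Π_{n-1}`-poised subset `Y_{n-1} ⊆ Y_n` with `T = Y_n \ Y_{n-1}`, the
set `∪_{t∈T} {m·ℓ_{t,Y_n} : m ∈ L, m(t) = 0}` spans `Π_{n+1} ∩ I(Y_n)` and
contains an H-basis of `I(Y_n)` whose elements are products of linear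
polynomials. -/
theorem stmt19 (n : ℕ) (hn : 1 ≤ n) (Y : Finset Pt) (hY : Poised n Y)
    (ell : Pt → BPoly) (hell : IsFundamental n Y ell)
    (hGC : ∀ y ∈ Y, ∃ s : Multiset BPoly,
      (∀ m ∈ s, totalDegree m = 1) ∧ ell y = s.prod)
    (z : Pt) (hz : ∀ y ∈ Y, eval z (ell y) ≠ 0)
    (Y' : Finset Pt) (hY'sub : Y' ⊆ Y) (hY' : Poised (n - 1) Y') :
    Submodule.span ℝ (gcSet Y Y' z ell) = PiLE (n + 1) ⊓ vSub (Y : Set Pt) ∧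
    ∃ H : Finset BPoly, (H : Set BPoly) ⊆ gcSet Y Y' z ell ∧
      IsHBasisSet (vIdeal (Y : Set Pt)) H ∧
      ∀ p ∈ H, ∃ s : Multiset BPoly,
        (∀ m ∈ s, totalDegree m = 1) ∧ p = s.prod := by
  have hspan := span_gcSet_eq hn hY hell hGC hz hY'sub hY'
  have hfg : (Submodule.span ℝ (gcSet Y Y' z ell)).FG := by
    rw [hspan, Submodule.fg_iff_finiteDimensional]
    exact Submodule.finiteDimensional_of_le inf_le_left
  obtain ⟨H, hHsub, hHspan⟩ := (Submodule.fg_span_iff_fg_span_finset_subset _).mp hfg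
  refine ⟨hspan, H, hHsub, hY.isHBasisSet_vIdeal (hHspan.symm.trans hspan), fun p hp => ?_⟩
  obtain ⟨t, ht, m, hm, -, -, -, rfl⟩ := hHsub hp
  exact IsProdOfLinear.linear_mul hm (hGC t (Finset.mem_sdiff.mp ht).1)
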